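/- arXiv:1512.03421 — 2 statements merged into one kernel-verified Lean document; each statement's English description precedes it below -/
import Mathlib

section
/- Let m be an odd positive integer and let (T_0, T_1) be a 1-perfect trade in the m-cube. If m ≡ 3 (mod 4), then T_0 + 1^m = T_0 and T_1 + 1^m = T_1; if m ≡ 1 (mod 4), then T_0 = T_1 + 1^m. Here T_j + 1^m = {x + 1^m : x ∈ T_j} and 1^m is the all-one word of length m. -/
open Polynomial Finset


noncomputable def kraw (m t j : ℕ) : ℤ :=
  ((1 - X) ^ j * (1 + X) ^ (m - j) : Polynomial ℤ).coeff t

lemma coeff_one_sub_X_pow (n k : ℕ) :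
    ((1 - X : Polynomial ℤ) ^ n).coeff k = (-1) ^ k * n.choose k := by
  induction n generalizing k with
  | zero => cases k <;> simp [coeff_one]
  | succ n ih =>
    have : ((1 - X : Polynomial ℤ) ^ (n+1)) = (1-X)^n - (1-X)^n * X := by ring
    rw [this]
    cases k with
    | zero => simp [ih]
    | succ k =>
      rw [coeff_sub, coeff_mul_X, ih, ih, Nat.choose_succ_succ]
      push_cast
      ring

lemma kraw_zero (m t : ℕ) : kraw m t 0 = m.choose t := by
  simp [kraw, coeff_one_add_X_pow]

lemma kraw_last (m t : ℕ) : kraw m t m = (-1) ^ t * m.choose t := by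
  simp [kraw, coeff_one_sub_X_pow]


lemma d1 (b : ℕ) : derivative ((1 + X : Polynomial ℤ) ^ b) * (1 + X)
    = C (b : ℤ) * (1 + X) ^ b := by
  cases b with
  | zero => simp
  | succ n =>
    rw [derivative_pow]
    simp only [derivative_add, derivative_one, derivative_X, zero_add, mul_one,
      Nat.add_sub_cancel]
    rw [mul_assoc, ← pow_succ]

lemma d2 (a : ℕ) : derivative ((1 - X : Polynomial ℤ) ^ a) * (1 - X)
    = - C (a : ℤ) * (1 - X) ^ a := by
  cases a with
  | zero => simp
  | succ n =>
    rw [derivative_pow]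
    simp only [derivative_sub, derivative_one, derivative_X, zero_sub, Nat.add_sub_cancel]
    rw [mul_assoc]
    ring_nf

lemma derivR (a b : ℕ) :
    (1 - X) * (1 + X) * derivative ((1 - X : Polynomial ℤ) ^ a * (1 + X) ^ b)
    = (C ((b : ℤ) - a) - C ((a : ℤ) + b) * X) * ((1 - X) ^ a * (1 + X) ^ b) := by
  rw [derivative_mul]
  have h1 := d1 b
  have h2 := d2 a
  have hC : (C ((b : ℤ) - a) : Polynomial ℤ) = C (b:ℤ) - C (a:ℤ) := by rw [map_sub]
  have hC2 : (C ((a : ℤ) + b) : Polynomial ℤ) = C (a:ℤ) + C (b:ℤ) := by rw [map_add]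
  rw [hC, hC2]
  linear_combination ((1 + X)^b * (1 + X)) * h2 + ((1 - X : Polynomial ℤ)^a * (1 - X)) * h1

-- coefficient identity from the derivative relation
lemma coeff_rel (a b t : ℕ) (ht : a + b + 3 = 2 * t) :
    (t : ℤ) * ((1 - X : Polynomial ℤ) ^ a * (1 + X) ^ b).coeff t
      + ((a : ℤ) - b) * ((1 - X : Polynomial ℤ) ^ a * (1 + X) ^ b).coeff (t - 1)
      + ((t : ℤ) - 1) * ((1 - X : Polynomial ℤ) ^ a * (1 + X) ^ b).coeff (t - 2) = 0 := by
  have ht2 : 2 ≤ t := by omega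
  set R : Polynomial ℤ := (1 - X) ^ a * (1 + X) ^ b with hR
  have h := derivR a b
  have h' := congrArg (fun p => p.coeff (t - 1)) h
  -- LHS coeff
  have e1 : ((1 - X) * (1 + X) * derivative R).coeff (t - 1)
      = (derivative R).coeff (t - 1) - (X ^ 2 * derivative R).coeff (t - 1) := by
    have : (1 - X) * (1 + X) * derivative R = derivative R - X ^ 2 * derivative R := by ring
    rw [this, coeff_sub]
  have e2 : (derivative R).coeff (t - 1) = R.coeff t * t := by
    rw [coeff_derivative]
    congr 1
    · congr 1; omega
    · push_cast; congr 1; omega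
  have e3 : (X ^ 2 * derivative R).coeff (t - 1) = ((t : ℤ) - 2) * R.coeff (t - 2) := by
    rcases Nat.lt_or_ge t 3 with h3 | h3
    · have : t = 2 := by omega
      subst this
      rw [coeff_X_pow_mul']
      norm_num
    · have : t - 1 = (t - 3) + 2 := by omega
      rw [this, coeff_X_pow_mul, coeff_derivative]
      have : t - 3 + 1 = t - 2 := by omega
      rw [this]
      have : ((t : ℤ) - 2) = ((t - 3 : ℕ) : ℤ) + 1 := by push_cast; omega
      rw [this]; ring
  -- RHS coeff
  have e4 : ((C ((b : ℤ) - a) - C ((a : ℤ) + b) * X) * R).coeff (t - 1)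
      = ((b : ℤ) - a) * R.coeff (t - 1) - ((a : ℤ) + b) * R.coeff (t - 2) := by
    rw [sub_mul, coeff_sub, coeff_C_mul, mul_assoc, coeff_C_mul]
    have : t - 1 = (t - 2) + 1 := by omega
    rw [this, coeff_X_mul]
  rw [e1, e2, e3, e4] at h'
  have hab : ((a : ℤ) + b) = 2 * t - 3 := by push_cast; omega
  rw [hab] at h'
  linarith [h']

lemma krec0 (m t : ℕ) (hm : m = 2 * t - 1) (ht : 1 ≤ t) :
    kraw m t 0 + (m : ℤ) * kraw m t 1 = 0 := by
  obtain ⟨s, rfl⟩ : ∃ s, t = s + 1 := ⟨t - 1, by omega⟩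
  subst hm
  have h1 : 2 * (s + 1) - 1 = 2 * s + 1 := by omega
  simp only [kraw, h1, pow_zero, pow_one, one_mul, Nat.sub_zero, Nat.add_sub_cancel]
  have e0 : ((1 + X : Polynomial ℤ) ^ (2 * s + 1)).coeff (s + 1)
      = ((2 * s + 1).choose (s + 1) : ℤ) := coeff_one_add_X_pow ℤ _ _
  have e1 : ((1 - X : Polynomial ℤ) * (1 + X) ^ (2 * s)).coeff (s + 1)
      = ((2 * s).choose (s + 1) : ℤ) - ((2 * s).choose s : ℤ) := by
    have : (1 - X : Polynomial ℤ) * (1 + X) ^ (2 * s)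
        = (1 + X) ^ (2 * s) - X * (1 + X) ^ (2 * s) := by ring
    rw [this, coeff_sub, coeff_X_mul, coeff_one_add_X_pow, coeff_one_add_X_pow]
  rw [e0, e1]
  have hcast : ((2 * s + 1 : ℕ) : ℤ) = 2 * (s : ℤ) + 1 := by push_cast; ring
  have key : ((s : ℤ) + 1) * (2 * s).choose (s + 1) = (s : ℤ) * (2 * s).choose s := by
    have h := Nat.choose_succ_right_eq (2 * s) s
    have h' : 2 * s - s = s := by omega
    rw [h'] at h
    have hz := congrArg (Nat.cast : ℕ → ℤ) h
    push_cast at hz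
    linear_combination hz
  have pascal : ((2 * s + 1).choose (s + 1) : ℤ)
      = ((2 * s).choose s : ℤ) + ((2 * s).choose (s + 1) : ℤ) := by
    rw [Nat.choose_succ_succ]
    push_cast; ring
  rw [hcast, pascal]
  linear_combination 2 * key

lemma krecS (m t j : ℕ) (hm : m = 2 * t - 1) (hj : 1 ≤ j) (hjm : j + 1 ≤ m) :
    ((m - j : ℕ) : ℤ) * kraw m t (j + 1) + kraw m t j + (j : ℤ) * kraw m t (j - 1) = 0 := by
  obtain ⟨a, rfl⟩ : ∃ a, j = a + 1 := ⟨j - 1, by omega⟩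
  obtain ⟨b, hb⟩ : ∃ b, m = a + b + 2 := ⟨m - a - 2, by omega⟩
  have habt : a + b + 3 = 2 * t := by omega
  have ht2 : 2 ≤ t := by omega
  subst hb
  have h1 : a + b + 2 - (a + 1 + 1) = b := by omega
  have h2 : a + b + 2 - (a + 1) = b + 1 := by omega
  have h3 : a + 1 - 1 = a := by omega
  have h4 : a + b + 2 - a = b + 2 := by omega
  have h5 : ((a + b + 2 - (a + 1) : ℕ) : ℤ) = (b : ℤ) + 1 := by rw [h2]; push_cast; ring
  simp only [kraw, h1, h3, h4, h2, show a + 1 + 1 = a + 2 from rfl,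
    show a + b + 1 - a = b + 1 by omega]
  push_cast
  set R : Polynomial ℤ := (1 - X) ^ a * (1 + X) ^ b with hR
  have poly_id : C ((b : ℤ) + 1) * ((1 - X : Polynomial ℤ) ^ (a + 2) * (1 + X) ^ b)
      + (1 - X : Polynomial ℤ) ^ (a + 1) * (1 + X) ^ (b + 1)
      + C ((a : ℤ) + 1) * ((1 - X : Polynomial ℤ) ^ a * (1 + X) ^ (b + 2))
      = C ((a : ℤ) + b + 3) * R + C (2 * (a : ℤ) - 2 * b) * (X * R)
        + C ((a : ℤ) + b + 1) * (X ^ 2 * R) := by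
    simp only [hR, map_add, map_sub, map_mul, map_one, map_ofNat, C_eq_natCast]
    ring
  have hc := congrArg (fun p => p.coeff t) poly_id
  simp only [coeff_add, coeff_C_mul] at hc
  have cX : (X * R).coeff t = R.coeff (t - 1) := by
    have h : t = (t - 1) + 1 := by omega
    conv_lhs => rw [h]
    rw [coeff_X_mul]
  have cX2 : (X ^ 2 * R).coeff t = R.coeff (t - 2) := by
    have h : t = (t - 2) + 2 := by omega
    conv_lhs => rw [h]
    rw [coeff_X_pow_mul]
  rw [cX, cX2] at hc
  have hrel := coeff_rel a b t habt
  rw [← hR] at hrel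
  have h2t : ((t : ℤ)) * 2 = (a : ℤ) + b + 3 := by omega
  rw [hc]
  linear_combination 2 * hrel - (R.coeff t + R.coeff (t - 2)) * h2t


variable {m : ℕ}

def fw (T₀ T₁ : Finset (Fin m → ZMod 2)) (y : Fin m → ZMod 2) : ℤ :=
  (if y ∈ T₀ then 1 else 0) - (if y ∈ T₁ then 1 else 0)

def nbhd (y : Fin m → ZMod 2) : Finset (Fin m → ZMod 2) :=
  Finset.univ.filter fun z => hammingDist y z ≤ 1

def flp (y : Fin m → ZMod 2) (k : Fin m) : Fin m → ZMod 2 :=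
  Function.update y k (y k + 1)

lemma z2_ne_iff : ∀ a b : ZMod 2, a ≠ b ↔ b = a + 1 := by decide

lemma z2_self_ne : ∀ a : ZMod 2, a + 1 ≠ a := by decide

lemma flp_apply_self (y : Fin m → ZMod 2) (k : Fin m) : flp y k k = y k + 1 := by
  simp [flp]

lemma flp_apply_ne (y : Fin m → ZMod 2) (k i : Fin m) (h : i ≠ k) : flp y k i = y i := by
  simp [flp, Function.update_of_ne h]

lemma cube_ball_eq (y : Fin m → ZMod 2) :
    nbhd y = insert y (Finset.univ.image (flp y)) := by
  ext z
  simp only [nbhd, mem_filter, mem_univ, true_and, mem_insert, mem_image]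
  constructor
  · intro h
    interval_cases h' : hammingDist y z
    · left; exact (hammingDist_eq_zero.mp h').symm
    · right
      have hk' : ({i | y i ≠ z i} : Finset (Fin m)).card = 1 := h'
      obtain ⟨k, hk⟩ := Finset.card_eq_one.mp hk'
      refine ⟨k, ?_⟩
      funext i
      by_cases hik : i = k
      · subst hik
        have : i ∈ ({i} : Finset (Fin m)) := Finset.mem_singleton_self i
        rw [← hk] at this
        simp only [mem_filter, mem_univ, true_and] at this
        rw [flp_apply_self]
        exact ((z2_ne_iff _ _).mp this).symm
      · have : i ∉ ({k} : Finset (Fin m)) := by simp [hik]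
        rw [← hk] at this
        simp only [mem_filter, mem_univ, true_and, not_not] at this
        rw [flp_apply_ne y k i hik, this]
  · rintro (rfl | ⟨k, -, rfl⟩)
    · simp
    · have : hammingDist y (flp y k) = 1 := by
        have hset : Finset.univ.filter (fun i => y i ≠ flp y k i) = {k} := by
          ext i
          simp only [mem_filter, mem_univ, true_and, mem_singleton]
          by_cases hik : i = k
          · subst hik; simp [flp_apply_self, (z2_self_ne (y i)).symm]
          · simp [flp_apply_ne y k i hik, hik]
        simp only [hammingDist]
        rw [show ({i | y i ≠ flp y k i} : Finset (Fin m))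
            = Finset.univ.filter (fun i => y i ≠ flp y k i) from rfl, hset]
        simp
      omega

lemma dist_flp_eq (x y : Fin m → ZMod 2) (k : Fin m) (h : x k = y k) :
    hammingDist x (flp y k) = hammingDist x y + 1 := by
  have hset : ({i | x i ≠ flp y k i} : Finset (Fin m))
      = insert k ({i | x i ≠ y i} : Finset (Fin m)) := by
    ext i
    simp only [mem_filter, mem_univ, true_and, mem_insert]
    by_cases hik : i = k
    · subst hik
      simp only [flp_apply_self, true_or, iff_true, h]
      exact fun hc => z2_self_ne (y i) hc.symm
    · rw [flp_apply_ne y k i hik]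
      simp [hik]
  have hk : k ∉ ({i | x i ≠ y i} : Finset (Fin m)) := by
    simp only [mem_filter, mem_univ, true_and, not_not]; exact h
  show ({i | x i ≠ flp y k i} : Finset (Fin m)).card = ({i | x i ≠ y i} : Finset (Fin m)).card + 1
  rw [hset, Finset.card_insert_of_notMem hk]

lemma dist_flp_ne (x y : Fin m → ZMod 2) (k : Fin m) (h : x k ≠ y k) :
    hammingDist x (flp y k) + 1 = hammingDist x y := by
  have hset : ({i | x i ≠ flp y k i} : Finset (Fin m))
      = ({i | x i ≠ y i} : Finset (Fin m)).erase k := by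
    ext i
    simp only [mem_filter, mem_univ, true_and, Finset.mem_erase]
    by_cases hik : i = k
    · subst hik
      have hxy : x i = y i + 1 := (z2_ne_iff _ _).mp fun hc => h hc.symm
      simp [flp_apply_self, hxy]
    · rw [flp_apply_ne y k i hik]
      simp [hik]
  have hk : k ∈ ({i | x i ≠ y i} : Finset (Fin m)) := by
    simp only [mem_filter, mem_univ, true_and]; exact h
  show ({i | x i ≠ flp y k i} : Finset (Fin m)).card + 1 = ({i | x i ≠ y i} : Finset (Fin m)).card
  rw [hset, Finset.card_erase_add_one hk]

lemma sum_nbhd (g : (Fin m → ZMod 2) → ℤ) (y : Fin m → ZMod 2) :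
    ∑ z ∈ nbhd y, g z = g y + ∑ k : Fin m, g (flp y k) := by
  have hinj : ∀ k ∈ Finset.univ, ∀ k' ∈ Finset.univ, flp y k = flp y k' → k = k' := by
    intro k _ k' _ hkk'
    by_contra hne
    have := congrFun hkk' k
    rw [flp_apply_self, flp_apply_ne y k' k hne] at this
    exact z2_self_ne (y k) this
  have hy : y ∉ Finset.univ.image (flp y) := by
    simp only [mem_image, not_exists]
    intro k
    rintro ⟨-, hk⟩
    have := congrFun hk k
    rw [flp_apply_self] at this
    exact z2_self_ne (y k) this
  rw [cube_ball_eq, Finset.sum_insert hy, Finset.sum_image hinj]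

lemma dist_le (x y : Fin m → ZMod 2) : hammingDist x y ≤ m := by
  simpa using hammingDist_le_card_fintype (x := x) (y := y)

lemma cube_inner_sum (c : ℕ → ℤ) (x y : Fin m → ZMod 2) :
    ∑ z ∈ nbhd y, c (hammingDist x z)
    = c (hammingDist x y) + (hammingDist x y : ℤ) * c (hammingDist x y - 1)
      + ((m - hammingDist x y : ℕ) : ℤ) * c (hammingDist x y + 1) := by
  rw [sum_nbhd]
  have hcongr : ∀ k : Fin m, c (hammingDist x (flp y k))
      = if x k = y k then c (hammingDist x y + 1) else c (hammingDist x y - 1) := by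
    intro k
    by_cases h : x k = y k
    · rw [dist_flp_eq x y k h, if_pos h]
    · have h1 := dist_flp_ne x y k h
      have : hammingDist x (flp y k) = hammingDist x y - 1 := by omega
      rw [this, if_neg h]
  rw [Finset.sum_congr rfl (fun k _ => hcongr k), Finset.sum_ite]
  rw [Finset.sum_const, Finset.sum_const]
  have hc1 : (Finset.univ.filter fun k => ¬ x k = y k).card = hammingDist x y := rfl
  have hc2 : (Finset.univ.filter fun k => x k = y k).card = m - hammingDist x y := by
    have := Finset.card_filter_add_card_filter_not
      (s := (Finset.univ : Finset (Fin m))) (p := fun k => x k = y k)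
    simp only [Finset.card_univ, Fintype.card_fin] at this
    omega
  rw [hc1, hc2]
  push_cast [nsmul_eq_mul]
  ring

lemma ball_zero (T₀ T₁ : Finset (Fin m → ZMod 2))
    (h : ∀ x : Fin m → ZMod 2,
      (T₀.filter fun y => hammingDist x y ≤ 1).card =
        (T₁.filter fun y => hammingDist x y ≤ 1).card)
    (z : Fin m → ZMod 2) : ∑ y ∈ nbhd z, fw T₀ T₁ y = 0 := by
  have key : ∀ T : Finset (Fin m → ZMod 2),
      ∑ y ∈ nbhd z, (if y ∈ T then (1:ℤ) else 0)
        = ((T.filter fun y => hammingDist z y ≤ 1).card : ℤ) := by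
    intro T
    rw [Finset.sum_boole]
    congr 1
    rw [nbhd, Finset.filter_filter]
    rw [show (T.filter fun y => hammingDist z y ≤ 1)
        = Finset.univ.filter (fun y => y ∈ T ∧ hammingDist z y ≤ 1) by
      ext w; simp [and_comm]]
    congr 1
    ext w
    simp [and_comm]
  simp only [fw, Finset.sum_sub_distrib, key T₀, key T₁, h z, sub_self]

lemma master (T₀ T₁ : Finset (Fin m → ZMod 2))
    (hb : ∀ z : Fin m → ZMod 2, ∑ y ∈ nbhd z, fw T₀ T₁ y = 0)
    (c : ℕ → ℤ) (x : Fin m → ZMod 2) :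
    ∑ y : Fin m → ZMod 2, fw T₀ T₁ y *
      (c (hammingDist x y) + (hammingDist x y : ℤ) * c (hammingDist x y - 1)
        + ((m - hammingDist x y : ℕ) : ℤ) * c (hammingDist x y + 1)) = 0 := by
  have h0 : ∑ z : Fin m → ZMod 2, c (hammingDist x z) * (∑ y ∈ nbhd z, fw T₀ T₁ y) = 0 := by
    simp only [hb, mul_zero, Finset.sum_const_zero]
  have swap : ∑ z : Fin m → ZMod 2, c (hammingDist x z) * (∑ y ∈ nbhd z, fw T₀ T₁ y)
      = ∑ y : Fin m → ZMod 2, fw T₀ T₁ y * (∑ z ∈ nbhd y, c (hammingDist x z)) := by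
    simp only [Finset.mul_sum, nbhd, Finset.sum_filter]
    rw [Finset.sum_comm]
    apply Finset.sum_congr rfl
    intro y _
    apply Finset.sum_congr rfl
    intro z _
    rw [hammingDist_comm z y]
    split_ifs <;> ring
  rw [swap] at h0
  rw [← h0]
  apply Finset.sum_congr rfl
  intro y _
  rw [cube_inner_sum]

def Fj (T₀ T₁ : Finset (Fin m → ZMod 2)) (x : Fin m → ZMod 2) (j : ℕ) : ℤ :=
  ∑ y ∈ Finset.univ.filter (fun y => hammingDist x y = j), fw T₀ T₁ y

lemma helper0 (M i : ℕ) (v : ℤ) :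
    v * ((if i = 0 then (1:ℤ) else 0) + (i : ℤ) * (if i - 1 = 0 then (1:ℤ) else 0)
      + ((M - i : ℕ) : ℤ) * (if i + 1 = 0 then (1:ℤ) else 0))
    = (if i = 0 then v else 0) + (if i = 1 then v else 0) := by
  rcases i with _ | _ | n <;> simp <;> ring

lemma helperS (M i j : ℕ) (v : ℤ) :
    v * ((if i = j + 1 then (1:ℤ) else 0) + (i : ℤ) * (if i - 1 = j + 1 then (1:ℤ) else 0)
      + ((M - i : ℕ) : ℤ) * (if i + 1 = j + 1 then (1:ℤ) else 0))
    = (if i = j + 1 then v else 0) + ((j : ℤ) + 2) * (if i = j + 2 then v else 0)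
      + ((M - j : ℕ) : ℤ) * (if i = j then v else 0) := by
  have hB : (i - 1 = j + 1) ↔ (i = j + 2) := by omega
  have hC : (i + 1 = j + 1) ↔ (i = j) := by omega
  simp only [hB, hC]
  by_cases hA : i = j + 1
  · subst hA
    simp [show ¬(j + 1 = j + 2) by omega, show ¬(j + 1 = j) by omega]
  · by_cases hD : i = j + 2
    · subst hD
      simp only [if_neg hA, if_pos rfl, if_neg (show ¬(j + 2 = j) by omega)]
      push_cast
      ring
    · by_cases hE : i = j
      · subst hE
        simp [hA, hD, mul_comm]
      · simp only [if_neg hA, if_neg hD, if_neg hE]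
        ring

lemma Fj_eq_sum_ite (T₀ T₁ : Finset (Fin m → ZMod 2)) (x : Fin m → ZMod 2) (j : ℕ) :
    Fj T₀ T₁ x j = ∑ y : Fin m → ZMod 2, (if hammingDist x y = j then fw T₀ T₁ y else 0) := by
  rw [Fj, Finset.sum_filter]

lemma rec0 (T₀ T₁ : Finset (Fin m → ZMod 2))
    (hb : ∀ z : Fin m → ZMod 2, ∑ y ∈ nbhd z, fw T₀ T₁ y = 0) (x : Fin m → ZMod 2) :
    Fj T₀ T₁ x 0 + Fj T₀ T₁ x 1 = 0 := by
  have h := master T₀ T₁ hb (fun n => if n = 0 then 1 else 0) x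
  simp only [helper0 m (hammingDist x _) (fw T₀ T₁ _)] at h
  rw [Finset.sum_add_distrib] at h
  rw [Fj_eq_sum_ite, Fj_eq_sum_ite]
  exact h

lemma recS (T₀ T₁ : Finset (Fin m → ZMod 2))
    (hb : ∀ z : Fin m → ZMod 2, ∑ y ∈ nbhd z, fw T₀ T₁ y = 0) (x : Fin m → ZMod 2) (j : ℕ) :
    Fj T₀ T₁ x (j + 1) + ((j : ℤ) + 2) * Fj T₀ T₁ x (j + 2)
      + ((m - j : ℕ) : ℤ) * Fj T₀ T₁ x j = 0 := by
  have h := master T₀ T₁ hb (fun n => if n = j + 1 then 1 else 0) x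
  simp only [helperS m (hammingDist x _) j (fw T₀ T₁ _)] at h
  rw [Finset.sum_add_distrib, Finset.sum_add_distrib, ← Finset.mul_sum, ← Finset.mul_sum] at h
  rw [Fj_eq_sum_ite, Fj_eq_sum_ite, Fj_eq_sum_ite]
  exact h

lemma sphere_zero (T₀ T₁ : Finset (Fin m → ZMod 2)) (x : Fin m → ZMod 2) :
    Fj T₀ T₁ x 0 = fw T₀ T₁ x := by
  rw [Fj]
  rw [show Finset.univ.filter (fun y => hammingDist x y = 0) = {x} by
    ext y
    simp only [mem_filter, mem_univ, true_and, mem_singleton, hammingDist_eq_zero]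
    exact eq_comm]
  rw [Finset.sum_singleton]

lemma sphere_top (T₀ T₁ : Finset (Fin m → ZMod 2)) (x : Fin m → ZMod 2) :
    Fj T₀ T₁ x m = fw T₀ T₁ (x + fun _ => 1) := by
  set xc : Fin m → ZMod 2 := x + fun _ => 1 with hxc
  have hfilter : Finset.univ.filter (fun y => hammingDist x y = m) = {xc} := by
    ext y
    simp only [mem_filter, mem_univ, true_and, mem_singleton]
    constructor
    · intro h
      have huniv : ({i | x i ≠ y i} : Finset (Fin m)) = Finset.univ := by
        apply Finset.eq_univ_of_card
        have : hammingDist x y = Fintype.card (Fin m) := by rw [h, Fintype.card_fin]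
        exact this
      funext i
      have hi : i ∈ ({i | x i ≠ y i} : Finset (Fin m)) := by
        rw [huniv]; exact Finset.mem_univ i
      simp only [mem_filter, mem_univ, true_and] at hi
      have := (z2_ne_iff _ _).mp hi
      rw [hxc]
      simp [this]
    · rintro rfl
      have huniv : ({i | x i ≠ xc i} : Finset (Fin m)) = Finset.univ := by
        apply Finset.eq_univ_of_forall
        intro i
        simp only [mem_filter, mem_univ, true_and, hxc, Pi.add_apply]
        exact fun hc => z2_self_ne (x i) hc.symm
      show ({i | x i ≠ xc i} : Finset (Fin m)).card = m
      rw [huniv, Finset.card_univ, Fintype.card_fin]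
  rw [Fj, hfilter, Finset.sum_singleton]
lemma main_ind (T₀ T₁ : Finset (Fin m → ZMod 2))
    (hb : ∀ z : Fin m → ZMod 2, ∑ y ∈ nbhd z, fw T₀ T₁ y = 0)
    (x : Fin m → ZMod 2) (t : ℕ) (hm : m = 2 * t - 1) (ht : 1 ≤ t) :
    ∀ n, n + 1 ≤ m →
      Fj T₀ T₁ x n * (m.choose t : ℤ) = (m.choose n : ℤ) * kraw m t n * Fj T₀ T₁ x 0 ∧
      Fj T₀ T₁ x (n + 1) * (m.choose t : ℤ)
        = (m.choose (n + 1) : ℤ) * kraw m t (n + 1) * Fj T₀ T₁ x 0 := by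
  intro n
  induction n with
  | zero =>
    intro h1
    constructor
    · rw [kraw_zero, Nat.choose_zero_right]
      push_cast
      ring
    · have h0 := rec0 T₀ T₁ hb x
      have hk := krec0 m t hm ht
      rw [kraw_zero] at hk
      rw [Nat.choose_one_right]
      linear_combination (m.choose t : ℤ) * h0 - Fj T₀ T₁ x 0 * hk
  | succ n ih =>
    intro h2
    obtain ⟨ihn, ihn1⟩ := ih (by omega)
    refine ⟨ihn1, ?_⟩
    have hrec := recS T₀ T₁ hb x n
    have hk := krecS m t (n + 1) hm (by omega) (by omega)
    simp only [Nat.add_sub_cancel] at hk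
    have hcast : ((n + 1 : ℕ) : ℤ) = (n : ℤ) + 1 := by push_cast; ring
    rw [hcast] at hk
    have hch1 : ((m - n : ℕ) : ℤ) * (m.choose n : ℤ) = ((n : ℤ) + 1) * (m.choose (n + 1) : ℤ) := by
      have h := Nat.choose_succ_right_eq m n
      have hz := congrArg (Nat.cast : ℕ → ℤ) h
      push_cast [Nat.cast_sub (by omega : n ≤ m)] at hz ⊢
      linarith [hz]
    have hch2 : ((m - (n + 1) : ℕ) : ℤ) * (m.choose (n + 1) : ℤ)
        = ((n : ℤ) + 2) * (m.choose (n + 2) : ℤ) := by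
      have h := Nat.choose_succ_right_eq m (n + 1)
      have hz := congrArg (Nat.cast : ℕ → ℤ) h
      push_cast [Nat.cast_sub (by omega : n + 1 ≤ m)] at hz ⊢
      linarith [hz]
    have hcancel : ((n : ℤ) + 2) ≠ 0 := by positivity
    apply mul_left_cancel₀ hcancel
    have hB : ((m - (n + 1) : ℕ) : ℤ) = (m : ℤ) - (n + 1) := by
      push_cast [Nat.cast_sub (by omega : n + 1 ≤ m)]; ring
    have hA : ((m - n : ℕ) : ℤ) = (m : ℤ) - n := by
      push_cast [Nat.cast_sub (by omega : n ≤ m)]; ring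
    rw [hB] at hch2
    rw [hA] at hch1 hrec
    rw [hB] at hk
    linear_combination (m.choose t : ℤ) * hrec - ihn1 - ((m : ℤ) - n) * ihn
      - (kraw m t n * Fj T₀ T₁ x 0) * hch1
      - ((m.choose (n + 1) : ℤ) * Fj T₀ T₁ x 0) * hk
      + (kraw m t (n + 2) * Fj T₀ T₁ x 0) * hch2

lemma comp_identity {m : ℕ} (T₀ T₁ : Finset (Fin m → ZMod 2))
    (hb : ∀ z : Fin m → ZMod 2, ∑ y ∈ nbhd z, fw T₀ T₁ y = 0)
    (t : ℕ) (hm : m = 2 * t - 1) (ht : 1 ≤ t) (x : Fin m → ZMod 2) :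
    fw T₀ T₁ (x + fun _ => 1) = (-1) ^ t * fw T₀ T₁ x := by
  have hm1 : 1 ≤ m := by omega
  obtain ⟨M, hM⟩ : ∃ M, m = M + 1 := ⟨m - 1, by omega⟩
  have h := (main_ind T₀ T₁ hb x t hm ht M (by omega)).2
  rw [show M + 1 = m from hM.symm] at h
  rw [sphere_top, sphere_zero, Nat.choose_self, kraw_last] at h
  have hC : ((m.choose t : ℤ)) ≠ 0 := by
    have : 0 < m.choose t := Nat.choose_pos (by omega)
    exact_mod_cast this.ne'
  apply mul_right_cancel₀ hC
  rw [h]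
  push_cast
  ring

/-- A 1-perfect trade in the m-cube: disjoint nonempty sets such that every
radius-1 ball contains equally many (0 or 1) elements of each. -/
def IsPerfTrade {m : ℕ} (T₀ T₁ : Finset (Fin m → ZMod 2)) : Prop :=
  T₀.Nonempty ∧ T₁.Nonempty ∧ Disjoint T₀ T₁ ∧
  ∀ x : Fin m → ZMod 2,
    (T₀.filter fun y => hammingDist x y ≤ 1).card =
      (T₁.filter fun y => hammingDist x y ≤ 1).card ∧
    (T₀.filter fun y => hammingDist x y ≤ 1).card ≤ 1

/-- For a 1-perfect trade in the m-cube with m odd: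
if m ≡ 3 (mod 4) each mate is closed under complementation;
if m ≡ 1 (mod 4) the mates are complements of each other. -/
theorem stmt_5 (m : ℕ) (hm : 0 < m) (hodd : Odd m)
    (T₀ T₁ : Finset (Fin m → ZMod 2)) (hT : IsPerfTrade T₀ T₁) :
    (m % 4 = 3 →
      T₀.image (fun x => x + fun _ => (1 : ZMod 2)) = T₀ ∧
      T₁.image (fun x => x + fun _ => (1 : ZMod 2)) = T₁) ∧
    (m % 4 = 1 →
      T₀ = T₁.image (fun x => x + fun _ => (1 : ZMod 2))) := by
  obtain ⟨hne0, hne1, hdisj, hcount⟩ := hT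
  set t := (m + 1) / 2 with htdef
  have hmod2 : m % 2 = 1 := Nat.odd_iff.mp hodd
  have hm2 : m = 2 * t - 1 := by omega
  have ht1 : 1 ≤ t := by omega
  have hb : ∀ z, ∑ y ∈ nbhd z, fw T₀ T₁ y = 0 := ball_zero T₀ T₁ (fun x => (hcount x).1)
  have hkey : ∀ x : Fin m → ZMod 2, fw T₀ T₁ (x + fun _ => 1) = (-1) ^ t * fw T₀ T₁ x :=
    comp_identity T₀ T₁ hb t hm2 ht1
  have hmem0 : ∀ y, y ∈ T₀ ↔ fw T₀ T₁ y = 1 := by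
    intro y
    by_cases h0 : y ∈ T₀
    · have h1 : y ∉ T₁ := Finset.disjoint_left.mp hdisj h0
      simp [fw, h0, h1]
    · by_cases h1 : y ∈ T₁ <;> simp [fw, h0, h1]
  have hmem1 : ∀ y, y ∈ T₁ ↔ fw T₀ T₁ y = -1 := by
    intro y
    by_cases h1 : y ∈ T₁
    · have h0 : y ∉ T₀ := Finset.disjoint_right.mp hdisj h1
      simp [fw, h0, h1]
    · by_cases h0 : y ∈ T₀ <;> simp [fw, h0, h1]
  have hinvol : ∀ x : Fin m → ZMod 2, ((x + fun _ => 1) + fun _ => 1) = x := by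
    intro x
    funext i
    have hz : ∀ a : ZMod 2, a + 1 + 1 = a := by decide
    simpa using hz (x i)
  constructor
  · intro h4
    have hteven : Even t := Nat.even_iff.mpr (by omega)
    have hfix : ∀ x : Fin m → ZMod 2, fw T₀ T₁ (x + fun _ => 1) = fw T₀ T₁ x := by
      intro x
      rw [hkey x, hteven.neg_one_pow, one_mul]
    constructor
    · ext z
      simp only [Finset.mem_image]
      constructor
      · rintro ⟨w, hw, rfl⟩
        exact (hmem0 _).mpr (by rw [hfix w]; exact (hmem0 w).mp hw)
      · intro hz
        exact ⟨z + fun _ => 1, (hmem0 _).mpr (by rw [hfix z]; exact (hmem0 z).mp hz), hinvol z⟩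
    · ext z
      simp only [Finset.mem_image]
      constructor
      · rintro ⟨w, hw, rfl⟩
        exact (hmem1 _).mpr (by rw [hfix w]; exact (hmem1 w).mp hw)
      · intro hz
        exact ⟨z + fun _ => 1, (hmem1 _).mpr (by rw [hfix z]; exact (hmem1 z).mp hz), hinvol z⟩
  · intro h4
    have htodd : Odd t := Nat.odd_iff.mpr (by omega)
    have hneg : ∀ x : Fin m → ZMod 2, fw T₀ T₁ (x + fun _ => 1) = - fw T₀ T₁ x := by
      intro x
      rw [hkey x, htodd.neg_one_pow]
      ring
    ext z
    simp only [Finset.mem_image]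
    constructor
    · intro hz
      refine ⟨z + fun _ => 1, ?_, hinvol z⟩
      apply (hmem1 _).mpr
      rw [hneg z, (hmem0 z).mp hz]
    · rintro ⟨w, hw, rfl⟩
      apply (hmem0 _).mpr
      rw [hneg w, (hmem1 w).mp hw]
      norm_num
end

section
/- Let (T_0, T_1) be a 1-perfect trade in the n-cube. For a set T of words of length n and a pair of symbols ab ∈ {00, 11}, let T·ab denote the set of words of length n+2 obtained by appending the two symbols a, b to each word of T. Then the pair (T_0·00 ∪ T_1·11, T_0·11 ∪ T_1·00) is a 1-perfect trade in the (n+2)-cube. -/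
/-- Append two fixed symbols a, b to every word of T. -/
def app2 {n : ℕ} (T : Finset (Fin n → ZMod 2)) (a b : ZMod 2) :
    Finset (Fin (n + 2) → ZMod 2) :=
  T.image fun x => Fin.append x ![a, b]

private lemma append_inj {n : ℕ} (v : Fin 2 → ZMod 2) :
    Function.Injective (fun z : Fin n → ZMod 2 => Fin.append z v) := by
  intro a b h
  funext i
  have := congrFun h (Fin.castAdd 2 i)
  simpa [Fin.append_left] using this

private lemma hd_append {n : ℕ} (x y : Fin n → ZMod 2) (u v : Fin 2 → ZMod 2) :
    hammingDist (Fin.append x u) (Fin.append y v) = hammingDist x y + hammingDist u v := by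
  classical
  simp [hammingDist, Finset.card_filter, Fin.sum_univ_add, Fin.append_left, Fin.append_right]

private lemma append_decomp {n : ℕ} (x : Fin (n + 2) → ZMod 2) :
    Fin.append (fun i => x (Fin.castAdd 2 i)) (fun i => x (Fin.natAdd n i)) = x := by
  funext i
  cases i using Fin.addCases with
  | left i => simp [Fin.append_left]
  | right i => simp [Fin.append_right]

private lemma app2_disjoint_tail {n : ℕ} (S T : Finset (Fin n → ZMod 2))
    {a b a' b' : ZMod 2} (h : a ≠ a') :
    Disjoint (app2 S a b) (app2 T a' b') := by
  simp only [Finset.disjoint_left, app2, Finset.mem_image]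
  rintro y ⟨z, _, rfl⟩ ⟨w, _, hw⟩
  apply h
  have := congrFun hw (Fin.natAdd n 0)
  simpa [Fin.append_right] using this.symm

private lemma card_pt {n : ℕ} (T : Finset (Fin n → ZMod 2)) (x' : Fin n → ZMod 2) :
    (T.filter fun z => hammingDist x' z + 1 ≤ 1).card = if x' ∈ T then 1 else 0 := by
  classical
  have h1 : (T.filter fun z => hammingDist x' z + 1 ≤ 1) = T.filter (Eq x') := by
    apply Finset.filter_congr
    intro z _
    rw [show (x' = z) ↔ hammingDist x' z = 0 from hammingDist_eq_zero.symm]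
    omega
  rw [h1, Finset.filter_eq]
  split_ifs <;> simp

private lemma card_big {n : ℕ} (T : Finset (Fin n → ZMod 2)) (x' : Fin n → ZMod 2) :
    (T.filter fun z => hammingDist x' z + 2 ≤ 1).card = 0 := by
  rw [Finset.card_eq_zero]
  apply Finset.filter_false_of_mem
  intro z _
  omega

/-- From a 1-perfect trade of length n one obtains a 1-perfect trade
of length n+2 by appending 00/11 as indicated. -/
theorem stmt_6 (n : ℕ) (T₀ T₁ : Finset (Fin n → ZMod 2)) (hT : IsPerfTrade T₀ T₁) :
    IsPerfTrade (app2 T₀ 0 0 ∪ app2 T₁ 1 1) (app2 T₀ 1 1 ∪ app2 T₁ 0 0) := by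
  classical
  obtain ⟨h0ne, h1ne, hdisj, hball⟩ := hT
  have hd01 : Disjoint (app2 T₀ 0 0) (app2 T₁ 1 1) := app2_disjoint_tail _ _ (by decide)
  have hd10 : Disjoint (app2 T₀ 1 1) (app2 T₁ 0 0) := app2_disjoint_tail _ _ (by decide)
  refine ⟨?_, ?_, ?_, ?_⟩
  · obtain ⟨z, hz⟩ := h0ne
    exact ⟨_, Finset.mem_union_left _ (Finset.mem_image_of_mem _ hz)⟩
  · obtain ⟨z, hz⟩ := h1ne
    exact ⟨_, Finset.mem_union_right _ (Finset.mem_image_of_mem _ hz)⟩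
  · rw [Finset.disjoint_union_left, Finset.disjoint_union_right, Finset.disjoint_union_right]
    refine ⟨⟨app2_disjoint_tail _ _ (by decide),
        (Finset.disjoint_image (append_inj _)).2 hdisj⟩,
      ⟨(Finset.disjoint_image (append_inj _)).2 hdisj.symm,
        app2_disjoint_tail _ _ (by decide)⟩⟩
  · intro x
    have hx := (append_decomp x).symm
    set x' : Fin n → ZMod 2 := fun i => x (Fin.castAdd 2 i) with hx'
    set u : Fin 2 → ZMod 2 := fun i => x (Fin.natAdd n i) with hu'
    rw [hx]
    have key : ∀ (T : Finset (Fin n → ZMod 2)) (a b : ZMod 2),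
        ((app2 T a b).filter fun y => hammingDist (Fin.append x' u) y ≤ 1).card
          = (T.filter fun z => hammingDist x' z + hammingDist u ![a, b] ≤ 1).card := by
      intro T a b
      rw [app2, Finset.filter_image,
        Finset.card_image_of_injective _ (append_inj _)]
      apply congrArg
      apply Finset.filter_congr
      intro z _
      rw [hd_append]
    rw [Finset.filter_union, Finset.filter_union,
      Finset.card_union_of_disjoint (Finset.disjoint_filter_filter hd01),
      Finset.card_union_of_disjoint (Finset.disjoint_filter_filter hd10),
      key, key, key, key]
    obtain ⟨heq, hle⟩ := hball x'
    have h2 : ∀ c : ZMod 2, c = 0 ∨ c = 1 := by decide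
    have hnd : ¬(x' ∈ T₀ ∧ x' ∈ T₁) := fun ⟨h0, h1⟩ => Finset.disjoint_left.1 hdisj h0 h1
    rcases h2 (u 0) with h0 | h0 <;> rcases h2 (u 1) with h1 | h1 <;>
      [ (have hu : u = ![0, 0] := by funext i; fin_cases i <;> simpa using ‹_›);
        (have hu : u = ![0, 1] := by funext i; fin_cases i <;> simpa using ‹_›);
        (have hu : u = ![1, 0] := by funext i; fin_cases i <;> simpa using ‹_›);
        (have hu : u = ![1, 1] := by funext i; fin_cases i <;> simpa using ‹_›)] <;>
      rw [hu]
    · rw [show hammingDist ![(0 : ZMod 2), 0] ![0, 0] = 0 from by decide,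
        show hammingDist ![(0 : ZMod 2), 0] ![1, 1] = 2 from by decide]
      simp only [Nat.add_zero, card_big]
      omega
    · rw [show hammingDist ![(0 : ZMod 2), 1] ![0, 0] = 1 from by decide,
        show hammingDist ![(0 : ZMod 2), 1] ![1, 1] = 1 from by decide,
        card_pt, card_pt]
      refine ⟨rfl, ?_⟩
      by_cases p : x' ∈ T₀ <;> by_cases q : x' ∈ T₁
      · exact absurd ⟨p, q⟩ hnd
      all_goals simp [p, q]
    · rw [show hammingDist ![(1 : ZMod 2), 0] ![0, 0] = 1 from by decide,
        show hammingDist ![(1 : ZMod 2), 0] ![1, 1] = 1 from by decide,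
        card_pt, card_pt]
      refine ⟨rfl, ?_⟩
      by_cases p : x' ∈ T₀ <;> by_cases q : x' ∈ T₁
      · exact absurd ⟨p, q⟩ hnd
      all_goals simp [p, q]
    · rw [show hammingDist ![(1 : ZMod 2), 1] ![0, 0] = 2 from by decide,
        show hammingDist ![(1 : ZMod 2), 1] ![1, 1] = 0 from by decide]
      simp only [Nat.add_zero, card_big]
      omega
end
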